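/- The gnomonic projection g_u is a homeomorphism between the space K_u^p(S^n) of proper convex bodies in the open hemisphere centered at u, equipped with the spherical Hausdorff metric δ_s, and the space K(R^n_u) of compact convex sets in R^n_u, equipped with the Euclidean Hausdorff metric δ. -/

import Mathlib

/-!
The gnomonic projection sends `K` to the section of the cone `rad K` by the affine hyperplane
`⟪u, x⟫ = 1`, translated by `-u`; so convexity passes both ways, and `x ↦ (x + u) / ‖x + u‖` is an
explicit inverse. For continuity, chordal and geodesic distance on the sphere are comparable,
`‖a - b‖ ≤ d(a, b) ≤ π/2 ‖a - b‖`, hence so are `δ_s` and the Euclidean Hausdorff distance. The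
inverse projection is 2-Lipschitz on `u^⊥`, and `g_u` is Lipschitz on each cap `⟪u, v⟫ ≥ c > 0`;
such a cap contains every body `δ_s`-close to a fixed `K`.
-/

open scoped RealInnerProductSpace Pointwise
open Real

noncomputable section

/-- `Esp n` is the ambient Euclidean space `ℝ^{n+1}` containing the unit sphere `S^n`. -/
abbrev Esp (n : ℕ) : Type := EuclideanSpace ℝ (Fin (n + 1))

/-- The unit sphere `S^n ⊆ ℝ^{n+1}`. -/
def uSphere (n : ℕ) : Set (Esp n) := {x | ‖x‖ = 1}

/-- `rad A = {λ • x : λ ≥ 0, x ∈ A}`. -/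
def radSet {n : ℕ} (A : Set (Esp n)) : Set (Esp n) :=
  {y | ∃ l : ℝ, 0 ≤ l ∧ ∃ x ∈ A, y = l • x}

/-- A set `A ⊆ S^n` is spherically convex if `rad A` is convex. -/
def SphConvex {n : ℕ} (A : Set (Esp n)) : Prop := Convex ℝ (radSet A)

/-- The open hemisphere centered at `u`. -/
def openHemi {n : ℕ} (u : Esp n) : Set (Esp n) := {v | ‖v‖ = 1 ∧ 0 < ⟪u, v⟫}

/-- The equator `S_u = {v ∈ S^n : u ⬝ v = 0}`. -/
def equator {n : ℕ} (u : Esp n) : Set (Esp n) := {v | ‖v‖ = 1 ∧ ⟪u, v⟫ = 0}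

/-- Proper convex bodies contained in the open hemisphere centered at `u`:
the class `K_u^p(S^n)`. -/
def properBodies {n : ℕ} (u : Esp n) : Set (Set (Esp n)) :=
  {K | K.Nonempty ∧ IsClosed K ∧ K ⊆ openHemi u ∧ SphConvex K}

/-- All proper convex bodies `K^p(S^n)`. -/
def allProperBodies (n : ℕ) : Set (Set (Esp n)) :=
  {K | ∃ u : Esp n, ‖u‖ = 1 ∧ K ∈ properBodies u}

/-- The gnomonic projection `g_u(v) = v/(u⬝v) − u`. -/
def gno {n : ℕ} (u v : Esp n) : Esp n := (⟪u, v⟫)⁻¹ • v - u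

/-- The inverse gnomonic projection `x ↦ (x+u)/‖x+u‖`. -/
def gnoInv {n : ℕ} (u x : Esp n) : Esp n := ‖x + u‖⁻¹ • (x + u)

/-- The hyperplane `ℝ^n_u = u^⊥` of `ℝ^{n+1}`. -/
def hyper {n : ℕ} (u : Esp n) : Set (Esp n) := {x | ⟪u, x⟫ = 0}

/-- The class `K(ℝ^n_u)` of (nonempty) compact convex subsets of the hyperplane `u^⊥`. -/
def cptCvx {n : ℕ} (u : Esp n) : Set (Set (Esp n)) :=
  {C | C.Nonempty ∧ IsCompact C ∧ Convex ℝ C ∧ C ⊆ hyper u}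

/-- The spherical support function `h_u(K,v) = max {sgn(v⬝w) d(u, w|S_{u,v}) : w ∈ K}`,
where `d(u, w|S_{u,v}) = arccos ((u⬝w)/√((u⬝w)² + (v⬝w)²))`. -/
def sphSupp {n : ℕ} (u : Esp n) (K : Set (Esp n)) (v : Esp n) : ℝ :=
  sSup ((fun w => Real.sign ⟪v, w⟫ *
    Real.arccos (⟪u, w⟫ / Real.sqrt (⟪u, w⟫ ^ 2 + ⟪v, w⟫ ^ 2))) '' K)

/-- The Euclidean support function `h(C,x) = sup {x ⬝ y : y ∈ C}`. -/
def esupp {n : ℕ} (C : Set (Esp n)) (x : Esp n) : ℝ :=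
  sSup ((fun y => ⟪x, y⟫) '' C)

/-- Spherical (geodesic) distance on `S^n`. -/
def sphDist {n : ℕ} (x y : Esp n) : ℝ := Real.arccos ⟪x, y⟫

/-- The Hausdorff distance `δ_s` induced by the spherical distance. -/
def sphHaus {n : ℕ} (A B : Set (Esp n)) : ℝ :=
  sInf {r | 0 ≤ r ∧ (∀ a ∈ A, ∃ b ∈ B, sphDist a b ≤ r) ∧
    (∀ b ∈ B, ∃ a ∈ A, sphDist a b ≤ r)}

/-- The metric `γ_u(K,L) = max_{v ∈ S_u} |h_u(K,v) − h_u(L,v)|`. -/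
def gammaU {n : ℕ} (u : Esp n) (K L : Set (Esp n)) : ℝ :=
  sSup ((fun v => |sphSupp u K v - sphSupp u L v|) '' equator u)

/-- Spherical projection of `K` onto the great subsphere `V ∩ S^n`:
`K|S = (rad K | V) ∩ S^n`. -/
def sphProj {n : ℕ} (V : Submodule ℝ (Esp n)) (K : Set (Esp n)) : Set (Esp n) :=
  ((fun x => (V.orthogonalProjection x : Esp n)) '' radSet K) ∩ uSphere n

/-- Orthogonal projection of a subset of `ℝ^{n+1}` onto a linear subspace `W`. -/
def eProj {n : ℕ} (W : Submodule ℝ (Esp n)) (C : Set (Esp n)) : Set (Esp n) :=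
  (fun x => (W.orthogonalProjection x : Esp n)) '' C

/-- The spherical convex hull: the intersection of all spherically convex subsets of `S^n`
containing `A`. -/
def sphHull {n : ℕ} (A : Set (Esp n)) : Set (Esp n) :=
  ⋂₀ {B | A ⊆ B ∧ B ⊆ uSphere n ∧ SphConvex B}

/-- The set `C` of pairs of proper convex bodies contained in a common open hemisphere. -/
def pairsC (n : ℕ) : Set (Set (Esp n) × Set (Esp n)) :=
  {p | ∃ u : Esp n, ‖u‖ = 1 ∧ p.1 ∈ properBodies u ∧ p.2 ∈ properBodies u}

/-- `u`-projection covariance of a binary operation on `K_u^p(S^n)`: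
`(K|S) * (L|S) = (K*L)|S` for all great subspheres `S = V ∩ S^n` through `u`
with `0 ≤ k = dim S ≤ n − 1`. -/
def uProjCovariant {n : ℕ} (u : Esp n)
    (op : Set (Esp n) → Set (Esp n) → Set (Esp n)) : Prop :=
  ∀ V : Submodule ℝ (Esp n), u ∈ V → Module.finrank ℝ V ≤ n →
    ∀ K ∈ properBodies u, ∀ L ∈ properBodies u,
      op (sphProj V K) (sphProj V L) = sphProj V (op K L)

/-- Projection covariance: `u`-projection covariance for every `u ∈ S^n`. -/
def projCovariantC {n : ℕ} (op : Set (Esp n) → Set (Esp n) → Set (Esp n)) : Prop :=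
  ∀ u : Esp n, ‖u‖ = 1 → uProjCovariant u op

/-- Projection covariance for operations on compact convex subsets of `u^⊥`. -/
def eProjCovariant {n : ℕ} (u : Esp n)
    (op : Set (Esp n) → Set (Esp n) → Set (Esp n)) : Prop :=
  ∀ W : Submodule ℝ (Esp n), (W : Set (Esp n)) ⊆ hyper u →
    ∀ K ∈ cptCvx u, ∀ L ∈ cptCvx u,
      op (eProj W K) (eProj W L) = eProj W (op K L)

open Metric

section InvSmul

variable {E : Type*} [NormedAddCommGroup E] [NormedSpace ℝ E]

theorem norm_inv_smul_sub_inv_smul_le {a b : ℝ} (ha : 0 < a) (hb : 0 < b) (x y : E) :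
    ‖a⁻¹ • x - b⁻¹ • y‖ ≤ a⁻¹ * (‖x - y‖ + |b - a| * (b⁻¹ * ‖y‖)) := by
  have hsplit : a⁻¹ • x - b⁻¹ • y = a⁻¹ • (x - y) + (a⁻¹ * (b - a) * b⁻¹) • y := by
    rw [show a⁻¹ * (b - a) * b⁻¹ = a⁻¹ - b⁻¹ by field_simp]
    module
  rw [hsplit]
  refine (norm_add_le _ _).trans_eq ?_
  rw [norm_smul, norm_smul, Real.norm_eq_abs, Real.norm_eq_abs, abs_mul, abs_mul,
    abs_of_pos (inv_pos.2 ha), abs_of_pos (inv_pos.2 hb)]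
  ring

end InvSmul

section Hausdorff

variable {α β : Type*} [PseudoMetricSpace α] [PseudoMetricSpace β]

theorem exists_dist_le_hausdorffDist {A B : Set α} (hA : IsCompact A) (hB : IsCompact B)
    (hA₀ : A.Nonempty) (hB₀ : B.Nonempty) {x : α} (hx : x ∈ A) :
    ∃ y ∈ B, dist x y ≤ hausdorffDist A B := by
  obtain ⟨y, hy, hxy⟩ := hB.exists_infDist_eq_dist hB₀ x
  exact ⟨y, hy, hxy ▸ infDist_le_hausdorffDist_of_mem hx
    (hausdorffEDist_ne_top_of_nonempty_of_bounded hA₀ hB₀ hA.isBounded hB.isBounded)⟩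

theorem LipschitzOnWith.hausdorffDist_image_le {f : α → β} {K : NNReal} {s A B : Set α}
    (hf : LipschitzOnWith K f s) (hAs : A ⊆ s) (hBs : B ⊆ s) (hA : IsCompact A)
    (hB : IsCompact B) (hA₀ : A.Nonempty) (hB₀ : B.Nonempty) :
    hausdorffDist (f '' A) (f '' B) ≤ K * hausdorffDist A B := by
  refine hausdorffDist_le_of_mem_dist (mul_nonneg K.2 hausdorffDist_nonneg) ?_ ?_
  · rintro _ ⟨x, hx, rfl⟩
    obtain ⟨y, hy, hxy⟩ := exists_dist_le_hausdorffDist hA hB hA₀ hB₀ hx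
    exact ⟨f y, Set.mem_image_of_mem f hy,
      (hf.dist_le_mul x (hAs hx) y (hBs hy)).trans (by gcongr)⟩
  · rintro _ ⟨y, hy, rfl⟩
    obtain ⟨x, hx, hyx⟩ := exists_dist_le_hausdorffDist hB hA hB₀ hA₀ hy
    rw [hausdorffDist_comm] at hyx
    exact ⟨f x, Set.mem_image_of_mem f hx,
      (hf.dist_le_mul y (hBs hy) x (hAs hx)).trans (by gcongr)⟩

end Hausdorff

section Sphere

variable {n : ℕ}

theorem Convex.sphConvex {D : Set (Esp n)} (hD : Convex ℝ D) : SphConvex D := by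
  rintro _ ⟨l₁, hl₁, x₁, hx₁, rfl⟩ _ ⟨l₂, hl₂, x₂, hx₂, rfl⟩ a b ha hb hab
  have h₁ : 0 ≤ a * l₁ := mul_nonneg ha hl₁
  have h₂ : 0 ≤ b * l₂ := mul_nonneg hb hl₂
  rw [smul_smul, smul_smul]
  rcases (add_nonneg h₁ h₂).eq_or_lt with hS | hS
  · refine ⟨0, le_rfl, x₁, hx₁, ?_⟩
    rw [show a * l₁ = 0 by linarith, show b * l₂ = 0 by linarith]
    simp
  · refine ⟨a * l₁ + b * l₂, hS.le, (a * l₁ / (a * l₁ + b * l₂)) • x₁ +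
      (b * l₂ / (a * l₁ + b * l₂)) • x₂, hD hx₁ hx₂ (by positivity) (by positivity)
      (by field_simp), ?_⟩
    rw [smul_add, smul_smul, smul_smul, mul_div_cancel₀ _ hS.ne', mul_div_cancel₀ _ hS.ne']

theorem radSet_image_smul {A : Set (Esp n)} {f : Esp n → ℝ} (hf : ∀ x ∈ A, 0 < f x) :
    radSet ((fun x => f x • x) '' A) = radSet A := by
  ext y
  constructor
  · rintro ⟨l, hl, _, ⟨x, hx, rfl⟩, rfl⟩
    exact ⟨l * f x, mul_nonneg hl (hf x hx).le, x, hx, smul_smul _ _ _⟩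
  · rintro ⟨l, hl, x, hx, rfl⟩
    exact ⟨l / f x, div_nonneg hl (hf x hx).le, f x • x, ⟨x, hx, rfl⟩,
      by rw [smul_smul, div_mul_cancel₀ _ (hf x hx).ne']⟩

theorem cos_sphDist {a b : Esp n} (ha : ‖a‖ = 1) (hb : ‖b‖ = 1) :
    cos (sphDist a b) = ⟪a, b⟫ := by
  have h := abs_real_inner_le_norm a b
  rw [ha, hb, one_mul] at h
  exact cos_arccos (abs_le.1 h).1 (abs_le.1 h).2

theorem norm_sub_sq_eq_two_sub_two_mul_cos_sphDist {a b : Esp n} (ha : ‖a‖ = 1)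
    (hb : ‖b‖ = 1) : ‖a - b‖ ^ 2 = 2 - 2 * cos (sphDist a b) := by
  rw [cos_sphDist ha hb, norm_sub_sq_real, ha, hb]
  ring

theorem dist_le_sphDist {a b : Esp n} (ha : ‖a‖ = 1) (hb : ‖b‖ = 1) :
    dist a b ≤ sphDist a b := by
  have hθ : 0 ≤ sphDist a b := arccos_nonneg _
  rw [dist_eq_norm, ← pow_le_pow_iff_left₀ (norm_nonneg _) hθ two_ne_zero,
    norm_sub_sq_eq_two_sub_two_mul_cos_sphDist ha hb]
  linarith [one_sub_sq_div_two_le_cos (x := sphDist a b)]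

theorem sphDist_le_mul_dist {a b : Esp n} (ha : ‖a‖ = 1) (hb : ‖b‖ = 1) :
    sphDist a b ≤ π / 2 * dist a b := by
  have hθ : 0 ≤ sphDist a b := arccos_nonneg _
  have hcos : cos (sphDist a b) ≤ 1 - 2 / π ^ 2 * sphDist a b ^ 2 :=
    cos_le_one_sub_mul_cos_sq (by rw [abs_of_nonneg hθ]; exact arccos_le_pi _)
  rw [dist_eq_norm, ← pow_le_pow_iff_left₀ hθ (by positivity) two_ne_zero, mul_pow,
    norm_sub_sq_eq_two_sub_two_mul_cos_sphDist ha hb]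
  calc sphDist a b ^ 2 = (π / 2) ^ 2 * (4 / π ^ 2 * sphDist a b ^ 2) := by
        field_simp; ring
    _ ≤ (π / 2) ^ 2 * (2 - 2 * cos (sphDist a b)) := by
        gcongr
        linarith [show 4 / π ^ 2 * sphDist a b ^ 2 = 2 * (2 / π ^ 2 * sphDist a b ^ 2) by ring]

theorem hausdorffDist_le_sphHaus {A B : Set (Esp n)} (hA : A ⊆ uSphere n) (hB : B ⊆ uSphere n)
    (hA₀ : A.Nonempty) (hB₀ : B.Nonempty) : hausdorffDist A B ≤ sphHaus A B := by
  refine le_csInf ⟨π, pi_nonneg, fun a _ => ⟨hB₀.some, hB₀.some_mem, arccos_le_pi _⟩,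
    fun b _ => ⟨hA₀.some, hA₀.some_mem, arccos_le_pi _⟩⟩ ?_
  rintro r ⟨hr, hAB, hBA⟩
  refine hausdorffDist_le_of_mem_dist hr (fun a ha => ?_) (fun b hb => ?_)
  · obtain ⟨b, hb, hab⟩ := hAB a ha
    exact ⟨b, hb, (dist_le_sphDist (hA ha) (hB hb)).trans hab⟩
  · obtain ⟨a, ha, hab⟩ := hBA b hb
    exact ⟨a, ha, dist_comm b a ▸ (dist_le_sphDist (hA ha) (hB hb)).trans hab⟩

theorem sphHaus_le_mul_hausdorffDist {A B : Set (Esp n)} (hA : A ⊆ uSphere n)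
    (hB : B ⊆ uSphere n) (hAc : IsCompact A) (hBc : IsCompact B) (hA₀ : A.Nonempty)
    (hB₀ : B.Nonempty) : sphHaus A B ≤ π / 2 * hausdorffDist A B := by
  refine csInf_le ⟨0, fun r hr => hr.1⟩
    ⟨mul_nonneg (by positivity) hausdorffDist_nonneg, fun a ha => ?_, fun b hb => ?_⟩
  · obtain ⟨b, hb, hab⟩ := exists_dist_le_hausdorffDist hAc hBc hA₀ hB₀ ha
    exact ⟨b, hb, (sphDist_le_mul_dist (hA ha) (hB hb)).trans (by gcongr)⟩
  · obtain ⟨a, ha, hba⟩ := exists_dist_le_hausdorffDist hBc hAc hB₀ hA₀ hb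
    rw [dist_comm, hausdorffDist_comm] at hba
    exact ⟨a, ha, (sphDist_le_mul_dist (hA ha) (hB hb)).trans (by gcongr)⟩

end Sphere

section Gnomonic

variable {n : ℕ} {u : Esp n}

theorem abs_inner_sub_inner_le_dist (hu : ‖u‖ = 1) (a b : Esp n) :
    |⟪u, a⟫ - ⟪u, b⟫| ≤ dist a b := by
  rw [← inner_sub_right, dist_eq_norm]
  simpa [hu] using abs_real_inner_le_norm u (a - b)

theorem gno_mem_hyper (hu : ‖u‖ = 1) {v : Esp n} (hv : ⟪u, v⟫ ≠ 0) : gno u v ∈ hyper u := by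
  change ⟪u, gno u v⟫ = 0
  rw [gno, inner_sub_right, real_inner_smul_right, inv_mul_cancel₀ hv,
    inner_self_eq_one_of_norm_eq_one hu, sub_self]

theorem one_le_norm_add_of_mem_hyper (hu : ‖u‖ = 1) {x : Esp n} (hx : x ∈ hyper u) : 1 ≤ ‖x + u‖ := by
  have h : ‖x + u‖ ^ 2 = ‖x‖ ^ 2 + 1 := by
    rw [norm_add_sq_real, real_inner_comm, hx, hu]
    ring
  nlinarith [norm_nonneg (x + u), norm_nonneg x]

theorem gnoInv_mem_openHemi (hu : ‖u‖ = 1) {x : Esp n} (hx : x ∈ hyper u) :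
    gnoInv u x ∈ openHemi u := by
  have h := one_le_norm_add_of_mem_hyper hu hx
  refine ⟨?_, ?_⟩
  · rw [gnoInv, norm_smul, norm_inv, norm_norm, inv_mul_cancel₀ (by positivity)]
  · rw [gnoInv, real_inner_smul_right, inner_add_right, hx, inner_self_eq_one_of_norm_eq_one hu,
      zero_add, mul_one]
    positivity

theorem invOn_gnoInv_gno (hu : ‖u‖ = 1) : Set.InvOn (gnoInv u) (gno u) (openHemi u) (hyper u) := by
  constructor
  · rintro v ⟨hv₁, hv₂⟩
    have hvu : gno u v + u = ⟪u, v⟫⁻¹ • v := by rw [gno, sub_add_cancel]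
    rw [gnoInv, hvu, norm_smul, norm_inv, Real.norm_eq_abs, abs_of_pos hv₂, hv₁, mul_one,
      inv_inv, smul_smul, mul_inv_cancel₀ hv₂.ne', one_smul]
  · intro x hx
    have h := one_le_norm_add_of_mem_hyper hu hx
    have hinner : ⟪u, gnoInv u x⟫ = ‖x + u‖⁻¹ := by
      rw [gnoInv, real_inner_smul_right, inner_add_right, hx,
        inner_self_eq_one_of_norm_eq_one hu, zero_add, mul_one]
    rw [gno, hinner, inv_inv, gnoInv, smul_smul, mul_inv_cancel₀ (by positivity), one_smul,
      add_sub_cancel_right]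

theorem continuousOn_gno (u : Esp n) : ContinuousOn (gno u) (openHemi u) := by
  have h : ContinuousOn (fun v : Esp n => ⟪u, v⟫) (openHemi u) := by fun_prop
  exact ((h.inv₀ fun _ hv => hv.2.ne').smul continuousOn_id).sub continuousOn_const

theorem lipschitzOnWith_gnoInv (hu : ‖u‖ = 1) : LipschitzOnWith 2 (gnoInv u) (hyper u) := by
  refine LipschitzOnWith.of_dist_le_mul fun x hx y hy => ?_
  have hx₁ := one_le_norm_add_of_mem_hyper hu hx
  have hy₁ := one_le_norm_add_of_mem_hyper hu hy
  have hxy : ‖(x + u) - (y + u)‖ = dist x y := by rw [add_sub_add_right_eq_sub, dist_eq_norm]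
  rw [dist_eq_norm, NNReal.coe_ofNat]
  calc ‖gnoInv u x - gnoInv u y‖
      ≤ ‖x + u‖⁻¹ * (‖(x + u) - (y + u)‖ + |‖y + u‖ - ‖x + u‖| * (‖y + u‖⁻¹ * ‖y + u‖)) :=
        norm_inv_smul_sub_inv_smul_le (by positivity) (by positivity) _ _
    _ ≤ 1 * (dist x y + dist x y * 1) := by
        rw [hxy, inv_mul_cancel₀ (by positivity)]
        gcongr
        · exact inv_le_one_of_one_le₀ hx₁
        · exact hxy ▸ (abs_norm_sub_norm_le _ _).trans_eq (norm_sub_rev _ _)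
    _ = 2 * dist x y := by ring

theorem lipschitzOnWith_gno (hu : ‖u‖ = 1) {c : ℝ} (hc : 0 < c) :
    LipschitzOnWith (Real.toNNReal (c⁻¹ * (1 + c⁻¹))) (gno u) {v | ‖v‖ ≤ 1 ∧ c ≤ ⟪u, v⟫} := by
  refine LipschitzOnWith.of_dist_le' fun v hv w hw => ?_
  have hv₀ : 0 < ⟪u, v⟫ := hc.trans_le hv.2
  have hw₀ : 0 < ⟪u, w⟫ := hc.trans_le hw.2
  have hgno : gno u v - gno u w = ⟪u, v⟫⁻¹ • v - ⟪u, w⟫⁻¹ • w := by simp only [gno]; abel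
  have hwv : |⟪u, w⟫ - ⟪u, v⟫| ≤ dist v w := by
    rw [abs_sub_comm]
    exact abs_inner_sub_inner_le_dist hu v w
  rw [dist_eq_norm, hgno]
  calc ‖⟪u, v⟫⁻¹ • v - ⟪u, w⟫⁻¹ • w‖
      ≤ ⟪u, v⟫⁻¹ * (‖v - w‖ + |⟪u, w⟫ - ⟪u, v⟫| * (⟪u, w⟫⁻¹ * ‖w‖)) :=
        norm_inv_smul_sub_inv_smul_le hv₀ hw₀ v w
    _ ≤ c⁻¹ * (dist v w + dist v w * (c⁻¹ * 1)) := by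
        rw [← dist_eq_norm]
        gcongr
        exacts [hv.2, hw.2, hw.1]
    _ = c⁻¹ * (1 + c⁻¹) * dist v w := by ring

theorem isCompact_of_mem_properBodies {K : Set (Esp n)} (hK : K ∈ properBodies u) :
    IsCompact K :=
  (isCompact_sphere 0 1).of_isClosed_subset hK.2.1 fun v hv => by
    simpa using (hK.2.2.1 hv).1

theorem gno_image_eq (hu : ‖u‖ = 1) {K : Set (Esp n)} (hK : K ⊆ openHemi u) :
    gno u '' K = (fun x => x + u) ⁻¹' radSet K ∩ hyper u := by
  ext x
  constructor
  · rintro ⟨v, hv, rfl⟩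
    exact ⟨⟨⟪u, v⟫⁻¹, inv_nonneg.2 (hK hv).2.le, v, hv, sub_add_cancel _ _⟩,
      gno_mem_hyper hu (hK hv).2.ne'⟩
  · rintro ⟨⟨l, -, v, hv, hxu⟩, hx⟩
    have hl : l * ⟪u, v⟫ = 1 := by
      rw [← real_inner_smul_right, ← hxu, inner_add_right, hx,
        inner_self_eq_one_of_norm_eq_one hu, zero_add]
    refine ⟨v, hv, ?_⟩
    rw [gno, ← eq_inv_of_mul_eq_one_left hl, ← hxu, add_sub_cancel_right]

theorem gno_image_mem_cptCvx (hu : ‖u‖ = 1) {K : Set (Esp n)} (hK : K ∈ properBodies u) :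
    gno u '' K ∈ cptCvx u := by
  have hKc := isCompact_of_mem_properBodies hK
  obtain ⟨hK₀, -, hKu, hKconv⟩ := hK
  refine ⟨hK₀.image _, hKc.image_of_continuousOn
    ((continuousOn_gno u).mono hKu), ?_, ?_⟩
  · rw [gno_image_eq hu hKu]
    exact (hKconv.translate_preimage_left u).inter
      (convex_hyperplane (innerₗ (Esp n) u).isLinear 0)
  · rintro _ ⟨v, hv, rfl⟩
    exact gno_mem_hyper hu (hKu hv).2.ne'

theorem gnoInv_image_mem_properBodies (hu : ‖u‖ = 1) {C : Set (Esp n)} (hC : C ∈ cptCvx u) :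
    gnoInv u '' C ∈ properBodies u := by
  obtain ⟨hC₀, hCc, hCconv, hCu⟩ := hC
  refine ⟨hC₀.image _, (hCc.image_of_continuousOn
    ((lipschitzOnWith_gnoInv hu).continuousOn.mono hCu)).isClosed,
    fun _ ⟨x, hx, hxv⟩ => hxv ▸ gnoInv_mem_openHemi hu (hCu hx), ?_⟩
  have hpos : ∀ y ∈ (fun x => x + u) '' C, 0 < ‖y‖⁻¹ := by
    rintro _ ⟨x, hx, rfl⟩
    exact inv_pos.2 (one_pos.trans_le (one_le_norm_add_of_mem_hyper hu (hCu hx)))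
  have hcone : radSet (gnoInv u '' C) = radSet ((fun x => x + u) '' C) := by
    rw [← radSet_image_smul hpos, Set.image_image]
    rfl
  rw [SphConvex, hcone]
  exact Convex.sphConvex (by simpa only [add_comm] using hCconv.translate u)

theorem bijOn_image_gno (hu : ‖u‖ = 1) :
    Set.BijOn (fun K => gno u '' K) (properBodies u) (cptCvx u) :=
  Set.InvOn.bijOn (f' := fun C => gnoInv u '' C)
    ⟨fun _ hK => (invOn_gnoInv_gno hu).1.image_image' hK.2.2.1,
      fun _ hC => (invOn_gnoInv_gno hu).2.image_image' hC.2.2.2⟩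
    (fun _ hK => gno_image_mem_cptCvx hu hK) (fun _ hC => gnoInv_image_mem_properBodies hu hC)

end Gnomonic

section Continuity

variable {n : ℕ} {u : Esp n}

theorem exists_hausdorffDist_image_gno_lt (hu : ‖u‖ = 1) {K : Set (Esp n)}
    (hK : K ∈ properBodies u) {ε : ℝ} (hε : 0 < ε) :
    ∃ r > 0, ∀ L ∈ properBodies u,
      sphHaus K L < r → hausdorffDist (gno u '' K) (gno u '' L) < ε := by
  have hKc := isCompact_of_mem_properBodies hK
  obtain ⟨c₀, hc₀, hKc₀⟩ := hKc.exists_forall_le' (f := fun v => ⟪u, v⟫) (by fun_prop)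
    fun v hv => (hK.2.2.1 hv).2
  set c := c₀ / 2 with hc_def
  have hc : 0 < c := half_pos hc₀
  set Λ := c⁻¹ * (1 + c⁻¹)
  have hΛ : 0 < Λ := by positivity
  refine ⟨min c (ε / Λ), by positivity, fun L hL hKL => ?_⟩
  have hLc := isCompact_of_mem_properBodies hL
  have hd : hausdorffDist K L < min c (ε / Λ) :=
    (hausdorffDist_le_sphHaus (fun v hv => (hK.2.2.1 hv).1) (fun v hv => (hL.2.2.1 hv).1)
      hK.1 hL.1).trans_lt hKL
  have hKS : K ⊆ {v | ‖v‖ ≤ 1 ∧ c ≤ ⟪u, v⟫} := fun v hv =>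
    ⟨(hK.2.2.1 hv).1.le, by linarith [hKc₀ v hv, hc_def]⟩
  have hLS : L ⊆ {v | ‖v‖ ≤ 1 ∧ c ≤ ⟪u, v⟫} := fun w hw => by
    obtain ⟨a, ha, hwa⟩ := exists_dist_le_hausdorffDist hLc hKc hL.1 hK.1 hw
    rw [hausdorffDist_comm] at hwa
    have hgap := (abs_le.1 (abs_inner_sub_inner_le_dist hu w a)).1
    exact ⟨(hL.2.2.1 hw).1.le, by linarith [hKc₀ a ha, min_le_left c (ε / Λ), hc_def]⟩
  calc hausdorffDist (gno u '' K) (gno u '' L) ≤ Λ * hausdorffDist K L := by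
        have h := (lipschitzOnWith_gno hu hc).hausdorffDist_image_le hKS hLS hKc hLc hK.1 hL.1
        rwa [Real.coe_toNNReal _ hΛ.le] at h
    _ < Λ * (ε / Λ) := by gcongr; exact hd.trans_le (min_le_right _ _)
    _ = ε := mul_div_cancel₀ _ hΛ.ne'

theorem exists_sphHaus_lt (hu : ‖u‖ = 1) {K : Set (Esp n)} (hK : K ∈ properBodies u) {ε : ℝ}
    (hε : 0 < ε) :
    ∃ r > 0, ∀ L ∈ properBodies u,
      hausdorffDist (gno u '' K) (gno u '' L) < r → sphHaus K L < ε := by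
  refine ⟨ε / π, by positivity, fun L hL hd => ?_⟩
  obtain ⟨hK₀', hKc', -, hKu'⟩ := gno_image_mem_cptCvx hu hK
  obtain ⟨hL₀', hLc', -, hLu'⟩ := gno_image_mem_cptCvx hu hL
  have hinv := (invOn_gnoInv_gno hu).1
  calc sphHaus K L ≤ π / 2 * hausdorffDist K L :=
        sphHaus_le_mul_hausdorffDist (fun v hv => (hK.2.2.1 hv).1)
          (fun v hv => (hL.2.2.1 hv).1) (isCompact_of_mem_properBodies hK)
          (isCompact_of_mem_properBodies hL) hK.1 hL.1
    _ = π / 2 * hausdorffDist (gnoInv u '' (gno u '' K)) (gnoInv u '' (gno u '' L)) := by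
        rw [hinv.image_image' hK.2.2.1, hinv.image_image' hL.2.2.1]
    _ ≤ π / 2 * (2 * hausdorffDist (gno u '' K) (gno u '' L)) := by
        gcongr
        simpa using (lipschitzOnWith_gnoInv hu).hausdorffDist_image_le hKu' hLu' hKc' hLc'
          hK₀' hL₀'
    _ < π / 2 * (2 * (ε / π)) := by gcongr
    _ = ε := by field_simp

end Continuity

theorem stmt8_general {n : ℕ} (u : Esp n) (hu : ‖u‖ = 1) :
    Set.BijOn (fun K => gno u '' K) (properBodies u) (cptCvx u) ∧
    (∀ K ∈ properBodies u, ∀ ε : ℝ, 0 < ε → ∃ r > 0, ∀ L ∈ properBodies u,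
      sphHaus K L < r → Metric.hausdorffDist (gno u '' K) (gno u '' L) < ε) ∧
    (∀ K ∈ properBodies u, ∀ ε : ℝ, 0 < ε → ∃ r > 0, ∀ L ∈ properBodies u,
      Metric.hausdorffDist (gno u '' K) (gno u '' L) < r → sphHaus K L < ε) :=
  ⟨bijOn_image_gno hu, fun _ hK _ hε => exists_hausdorffDist_image_gno_lt hu hK hε,
    fun _ hK _ hε => exists_sphHaus_lt hu hK hε⟩

/-- The gnomonic projection is a homeomorphism between
`(K_u^p(S^n), δ_s)` and `(K(ℝ^n_u), δ)`: it is a bijection which is continuous in both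
directions with respect to the two Hausdorff metrics. -/
theorem stmt8 {n : ℕ} (hn : 2 ≤ n) (u : Esp n) (hu : ‖u‖ = 1) :
    Set.BijOn (fun K => gno u '' K) (properBodies u) (cptCvx u) ∧
    (∀ K ∈ properBodies u, ∀ ε : ℝ, 0 < ε → ∃ r > 0, ∀ L ∈ properBodies u,
      sphHaus K L < r → Metric.hausdorffDist (gno u '' K) (gno u '' L) < ε) ∧
    (∀ K ∈ properBodies u, ∀ ε : ℝ, 0 < ε → ∃ r > 0, ∀ L ∈ properBodies u,
      Metric.hausdorffDist (gno u '' K) (gno u '' L) < r → sphHaus K L < ε) :=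
  stmt8_general u hu
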